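/- arXiv:1104.4585 — 3 statements merged into one kernel-verified Lean document; each statement's English description precedes it below -/
import Mathlib

section
/- For every n ≥ 1, the reduction map Dₙ → D₁ induces a group isomorphism from the cokernel Dₙ^×/φₙ(Eₙ^×) onto the cokernel D₁^×/φ₁(E₁^×). -/
open LaurentPolynomial

set_option maxHeartbeats 1000000
set_option synthInstance.maxHeartbeats 400000

noncomputable section

/-- `Λ = ℚ[t,t⁻¹]`, the ring of Laurent polynomials over `ℚ`. -/
abbrev Λ : Type := LaurentPolynomial ℚ

/-- The variable `t` of `Λ`. -/
def tΛ : Λ := T 1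

/-- The involution `P(t) ↦ P(t⁻¹)` of `Λ`. -/
def lbar : Λ →+* Λ := (invert : Λ ≃ₐ[ℚ] Λ).toRingEquiv.toRingHom

/-- `P ∈ Λ` is symmetric if `P(t⁻¹) = P(t)`. -/
def SymmL (P : Λ) : Prop := lbar P = P

/-- The fraction field `ℚ(t)` of `Λ`. -/
abbrev KΛ : Type := FractionRing Λ

/-- The involution of `ℚ(t)` extending that of `Λ`. -/
def kbar : KΛ →+* KΛ :=
  (IsFractionRing.ringEquivOfRingEquiv (A := Λ) (B := Λ) (K := KΛ) (L := KΛ)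
    (invert : Λ ≃ₐ[ℚ] Λ).toRingEquiv).toRingHom

lemma kbar_algebraMap (P : Λ) : kbar (algebraMap Λ KΛ P) = algebraMap Λ KΛ (lbar P) := by
  simp [kbar, lbar]

/-- The image of `Λ` inside `ℚ(t)`, as a `Λ`-submodule of `ℚ(t)`. -/
def ΛinK : Submodule Λ KΛ := LinearMap.range (Algebra.linearMap Λ KΛ)

/-- The quotient `Λ`-module `ℚ(t)/Λ`. -/
abbrev QL : Type := KΛ ⧸ ΛinK

/-- The class in `ℚ(t)/Λ` of an element of `ℚ(t)`. -/
abbrev QLmk : KΛ →ₗ[Λ] QL := ΛinK.mkQ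

/-- The class of the fraction `P/Q` in `ℚ(t)/Λ`, for `P Q : Λ`. -/
def fracQ (P Q : Λ) : QL := QLmk (algebraMap Λ KΛ P / algebraMap Λ KΛ Q)

/-- The involution of `ℚ(t)/Λ` induced by `P(t) ↦ P(t⁻¹)`. -/
def qbar : QL → QL := fun x =>
  Quotient.liftOn x (fun a => QLmk (kbar a)) (by
    intro a b h
    obtain ⟨r, hr⟩ := (Submodule.quotientRel_def (p := ΛinK)).mp h
    apply (Submodule.Quotient.eq _).2
    refine ⟨lbar r, ?_⟩
    rw [← map_sub, ← hr]
    exact (kbar_algebraMap _).symm)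

lemma qbar_mk (a : KΛ) : qbar (QLmk a) = QLmk (kbar a) := rfl

/-- Evaluation of a Laurent polynomial at a nonzero rational number. -/
def evalL (q : ℚˣ) : Λ →ₐ[ℚ] ℚ :=
  AddMonoidAlgebra.lift ℚ ℚ ℤ ((Units.coeHom ℚ).comp (zpowersHom ℚˣ q))

/-- A hermitian form on a `Λ`-module `A`, with values in `ℚ(t)/Λ`:
it is `Λ`-linear in the first variable and conjugate-symmetric (hence
semilinear with respect to the involution in the second variable). -/
structure HermForm (A : Type*) [AddCommGroup A] [Module Λ A] where
  bil : A → A → QL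
  add_left : ∀ x y z : A, bil (x + y) z = bil x z + bil y z
  smul_left : ∀ (r : Λ) (x y : A), bil (r • x) y = r • bil x y
  conj_symm : ∀ x y : A, bil x y = qbar (bil y x)

/-- A hermitian form is non-degenerate if `φ(x,y) = 0` for all `y` implies `x = 0`. -/
def HermForm.Nondeg {A : Type*} [AddCommGroup A] [Module Λ A] (φ : HermForm A) : Prop :=
  ∀ x : A, (∀ y : A, φ.bil x y = 0) → x = 0

/-- Two hermitian forms are isometric if they differ by a `Λ`-module automorphism. -/
def HermForm.Isometric {A : Type*} [AddCommGroup A] [Module Λ A]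
    (φ₁ φ₂ : HermForm A) : Prop :=
  ∃ f : A ≃ₗ[Λ] A, ∀ x y : A, φ₂.bil x y = φ₁.bil (f x) (f y)

/-- The `ℚ`-algebra map `ℚ[s] → Λ` sending `s` to `t + t⁻¹`. -/
def θQ : Polynomial ℚ →ₐ[ℚ] Λ := Polynomial.aeval (T 1 + T (-1))

/-- `Eₙ = Λ/(Δⁿ)`. -/
abbrev En (Δ : Λ) (n : ℕ) : Type := Λ ⧸ (Ideal.span {Δ ^ n} : Ideal Λ)

/-- `Dₙ = ℚ[s]/(Δ_sⁿ)`. -/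
abbrev Dn (Δs : Polynomial ℚ) (n : ℕ) : Type :=
  Polynomial ℚ ⧸ (Ideal.span {Δs ^ n} : Ideal (Polynomial ℚ))

/-- The ring homomorphism `Dₙ → Eₙ` induced by `s ↦ t + t⁻¹`. -/
def ιDE (Δ : Λ) (Δs : Polynomial ℚ) (hθ : θQ Δs = Δ) (n : ℕ) : Dn Δs n →+* En Δ n :=
  Ideal.quotientMap (Ideal.span {Δ ^ n}) θQ.toRingHom (by
    rw [Ideal.span_le, Set.singleton_subset_iff, SetLike.mem_coe, Ideal.mem_comap]
    have : θQ.toRingHom (Δs ^ n) = Δ ^ n := by rw [map_pow]; exact congrArg (· ^ n) hθ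
    rw [this]
    exact Ideal.subset_span rfl)

/-- The involution of `Eₙ` induced by that of `Λ` (using that `Δ` is symmetric). -/
def barE (Δ : Λ) (hsym : lbar Δ = Δ) (n : ℕ) : En Δ n →+* En Δ n :=
  Ideal.quotientMap (Ideal.span {Δ ^ n}) lbar (by
    rw [Ideal.span_le, Set.singleton_subset_iff, SetLike.mem_coe, Ideal.mem_comap]
    have : lbar (Δ ^ n) = Δ ^ n := by rw [map_pow, hsym]
    rw [this]
    exact Ideal.subset_span rfl)

/-- The image of `φₙ : Eₙˣ → Dₙˣ`, i.e. the subgroup of `Dₙˣ` of elements `d` such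
that the image of `d` in `Eₙ` is of the form `R·R̄` for a unit `R` of `Eₙ`. -/
def normSub (Δ : Λ) (Δs : Polynomial ℚ) (hθ : θQ Δs = Δ) (hsym : lbar Δ = Δ) (n : ℕ) :
    Subgroup (Dn Δs n)ˣ where
  carrier := {d : (Dn Δs n)ˣ | ∃ R : (En Δ n)ˣ,
    ιDE Δ Δs hθ n (d : Dn Δs n) = (R : En Δ n) * barE Δ hsym n (R : En Δ n)}
  one_mem' := ⟨1, by simp⟩
  mul_mem' := by
    rintro a b ⟨R, hR⟩ ⟨S, hS⟩
    refine ⟨R * S, ?_⟩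
    rw [Units.val_mul, map_mul, hR, hS, Units.val_mul, map_mul]
    ring
  inv_mem' := by
    rintro a ⟨R, hR⟩
    refine ⟨R⁻¹, ?_⟩
    have hxu : ιDE Δ Δs hθ n ((a⁻¹ : (Dn Δs n)ˣ) : Dn Δs n)
        * ((R : En Δ n) * barE Δ hsym n (R : En Δ n)) = 1 := by
      rw [← hR, ← map_mul, ← Units.val_mul, inv_mul_cancel, Units.val_one, map_one]
    have h1 : ((R⁻¹ : (En Δ n)ˣ) : En Δ n) * (R : En Δ n) = 1 := by
      rw [← Units.val_mul, inv_mul_cancel, Units.val_one]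
    have hyu : (((R⁻¹ : (En Δ n)ˣ) : En Δ n) * barE Δ hsym n ((R⁻¹ : (En Δ n)ˣ) : En Δ n))
        * ((R : En Δ n) * barE Δ hsym n (R : En Δ n)) = 1 := by
      calc (((R⁻¹ : (En Δ n)ˣ) : En Δ n) * barE Δ hsym n ((R⁻¹ : (En Δ n)ˣ) : En Δ n))
            * ((R : En Δ n) * barE Δ hsym n (R : En Δ n))
          = (((R⁻¹ : (En Δ n)ˣ) : En Δ n) * (R : En Δ n))
            * (barE Δ hsym n ((R⁻¹ : (En Δ n)ˣ) : En Δ n) * barE Δ hsym n (R : En Δ n)) := by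
            ring
        _ = 1 := by rw [h1, ← map_mul, h1, map_one, one_mul]
    calc ιDE Δ Δs hθ n ((a⁻¹ : (Dn Δs n)ˣ) : Dn Δs n)
        = ιDE Δ Δs hθ n ((a⁻¹ : (Dn Δs n)ˣ) : Dn Δs n)
          * (((R : En Δ n) * barE Δ hsym n (R : En Δ n))
          * (((R⁻¹ : (En Δ n)ˣ) : En Δ n) * barE Δ hsym n ((R⁻¹ : (En Δ n)ˣ) : En Δ n))) := by
          rw [show ((R : En Δ n) * barE Δ hsym n (R : En Δ n))
            * (((R⁻¹ : (En Δ n)ˣ) : En Δ n) * barE Δ hsym n ((R⁻¹ : (En Δ n)ˣ) : En Δ n)) = 1 by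
              rw [mul_comm]; exact hyu]
          rw [mul_one]
      _ = (ιDE Δ Δs hθ n ((a⁻¹ : (Dn Δs n)ˣ) : Dn Δs n)
          * ((R : En Δ n) * barE Δ hsym n (R : En Δ n)))
          * (((R⁻¹ : (En Δ n)ˣ) : En Δ n) * barE Δ hsym n ((R⁻¹ : (En Δ n)ˣ) : En Δ n)) := by
          ring
      _ = ((R⁻¹ : (En Δ n)ˣ) : En Δ n) * barE Δ hsym n ((R⁻¹ : (En Δ n)ˣ) : En Δ n) := by
          rw [hxu, one_mul]

instance normSub_normal (Δ : Λ) (Δs : Polynomial ℚ) (hθ : θQ Δs = Δ) (hsym : lbar Δ = Δ)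
    (n : ℕ) : (normSub Δ Δs hθ hsym n).Normal :=
  haveI : IsMulCommutative (Dn Δs n)ˣ := 
    ⟨⟨fun a b => Units.ext (by rw [Units.val_mul, Units.val_mul, mul_comm])⟩⟩
  Subgroup.normal_of_isMulCommutative (G := (Dn Δs n)ˣ) _

/-- The reduction map `Dₙ → D₁`. -/
def redD (Δs : Polynomial ℚ) (n : ℕ) (hn : 1 ≤ n) : Dn Δs n →+* Dn Δs 1 :=
  Ideal.Quotient.factor (by
    rw [Ideal.span_le, Set.singleton_subset_iff, SetLike.mem_coe, Ideal.mem_span_singleton,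
      pow_one]
    exact dvd_pow_self Δs (by omega))

/-!
The reduction `Dₙ → D₁` has nilpotent kernel `(Δ_s)/(Δ_sⁿ)`, so it is surjective on units, and it
visibly maps norms `R R̄` to norms. Conversely, let `d ∈ Dₙˣ` reduce to a norm `R₁ R̄₁`, and lift
`R₁` to a unit `Y` of `Eₙ`. Then `u = d / (Y Ȳ)` is symmetric and `u - 1` is nilpotent, so the
binomial series of `u ^ (1/2)` terminates and gives a square root `V` of `u` which is a polynomial
in `u`, hence symmetric; thus `d = (V Y) (V Y)‾` is a norm.
-/

open Polynomial Function

theorem X_pow_dvd_trunc_binomialSeries_sq_sub (k : ℕ) :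
    (X : ℚ[X]) ^ k ∣
      PowerSeries.trunc k (PowerSeries.binomialSeries ℚ (2⁻¹ : ℚ)) ^ 2 - (1 + X) := by
  set B := PowerSeries.binomialSeries ℚ (2⁻¹ : ℚ)
  have hB : B ^ 2 = 1 + PowerSeries.X := by
    rw [sq, ← PowerSeries.binomialSeries_add, show (2⁻¹ + 2⁻¹ : ℚ) = (1 : ℕ) by norm_num,
      PowerSeries.binomialSeries_nat, pow_one]
  rw [X_pow_dvd_iff]
  intro d hd
  have h := congrArg (fun p : ℚ[X] => p.coeff d) (PowerSeries.trunc_trunc_pow B k 2)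
  simp only [PowerSeries.coeff_trunc, if_pos hd, hB] at h
  rw [coeff_sub, ← coeff_coe, ← coeff_coe, coe_pow, h, coe_add, coe_one, coe_X, sub_self]

theorem exists_aeval_sq_eq_of_isNilpotent_sub_one {A : Type*} [CommRing A] [Algebra ℚ A] {u : A}
    (hu : IsNilpotent (u - 1)) : ∃ p : ℚ[X], aeval u p ^ 2 = u := by
  obtain ⟨k, hk⟩ := hu
  obtain ⟨q, hq⟩ := X_pow_dvd_trunc_binomialSeries_sq_sub k
  refine ⟨(PowerSeries.trunc k (PowerSeries.binomialSeries ℚ (2⁻¹ : ℚ))).comp (X - 1), ?_⟩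
  have h := congrArg (aeval (u - 1)) hq
  simp only [map_sub, map_pow, map_add, map_one, map_mul, aeval_X, hk, zero_mul] at h
  rw [aeval_comp, map_sub, aeval_X, map_one]
  linear_combination h

theorem isLocalHom_of_isNilpotent_ker {A B : Type*} [CommRing A] [CommRing B] (f : A →+* B)
    (hf : Surjective f) (hker : ∀ x, f x = 0 → IsNilpotent x) : IsLocalHom f where
  map_nonunit a ha := by
    obtain ⟨b, hb⟩ := hf ↑ha.unit⁻¹
    have hab : IsNilpotent (a * b - 1) :=
      hker _ (by rw [map_sub, map_mul, hb, ha.mul_val_inv, map_one, sub_self])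
    exact isUnit_of_mul_isUnit_left (by simpa using hab.isUnit_add_one)

theorem Ideal.Quotient.isNilpotent_of_factor_eq_zero {R : Type*} [CommRing R] {I J : Ideal R}
    {k : ℕ} (hJ : J ^ k ≤ I) (hIJ : I ≤ J) {x : R ⧸ I} (hx : factor hIJ x = 0) :
    IsNilpotent x := by
  obtain ⟨a, rfl⟩ := mk_surjective x
  rw [factor_mk, eq_zero_iff_mem] at hx
  exact ⟨k, by rw [← map_pow, eq_zero_iff_mem]; exact hJ (Ideal.pow_mem_pow hx k)⟩

section Norms

variable {E : Type*} [CommRing E] [Algebra ℚ E] (σ : E →+* E)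

theorem exists_mul_conj_eq_of_isNilpotent_sub_one {u : E} (hσu : σ u = u)
    (hu : IsNilpotent (u - 1)) : ∃ V : Eˣ, V * σ V = u := by
  obtain ⟨p, hp⟩ := exists_aeval_sq_eq_of_isNilpotent_sub_one hu
  have hσv : σ (aeval u p) = aeval u p := by
    rw [← σ.toRatAlgHom_apply, ← aeval_algHom_apply, RingHom.toRatAlgHom_apply, hσu]
  have hv : IsUnit (aeval u p) := by
    rw [← isUnit_pow_iff two_ne_zero, hp]
    simpa using hu.isUnit_add_one
  exact ⟨hv.unit, by rw [IsUnit.unit_spec, hσv, ← sq, hp]⟩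

theorem exists_eq_mul_conj_of_map_eq_mul_conj {E₁ : Type*} [CommRing E₁] (π : E →+* E₁)
    (hπ : Surjective π) (hker : ∀ x, π x = 0 → IsNilpotent x) (σ₁ : E₁ →+* E₁)
    (hσ : Involutive σ) (hπσ : ∀ x, π (σ x) = σ₁ (π x)) {x : E} (hσx : σ x = x)
    (R₁ : E₁ˣ) (hx : π x = R₁ * σ₁ R₁) : ∃ R : Eˣ, x = R * σ R := by
  have hlocal := isLocalHom_of_isNilpotent_ker π hπ hker
  obtain ⟨Y, hY⟩ := IsLocalRing.surjective_units_map_of_local_ringHom π hπ hlocal R₁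
  set W : Eˣ := Y * Units.map σ.toMonoidHom Y
  have hσW : Units.map σ.toMonoidHom W = W := by
    ext; simp [W, hσ _, mul_comm]
  have hσW_inv : σ ↑W⁻¹ = ↑W⁻¹ := by
    simpa using congrArg (fun U : Eˣ => (↑U⁻¹ : E)) hσW
  have hπW : π W = π x := by
    simp [W, hx, ← hY, hπσ]
  have hπu : π (x * ↑W⁻¹) = 1 := by
    rw [map_mul, ← hπW, ← map_mul, Units.mul_inv, map_one]
  obtain ⟨V, hV⟩ := exists_mul_conj_eq_of_isNilpotent_sub_one σ (u := x * ↑W⁻¹)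
    (by rw [map_mul, hσx, hσW_inv]) (hker _ (by rw [map_sub, hπu, map_one, sub_self]))
  refine ⟨V * Y, ?_⟩
  calc x = x * ↑W⁻¹ * W := by rw [Units.inv_mul_cancel_right]
    _ = V * σ V * (Y * σ Y) := by rw [hV]; rfl
    _ = ↑(V * Y) * σ ↑(V * Y) := by rw [Units.val_mul, map_mul]; ring

end Norms

theorem lbar_θQ (p : Polynomial ℚ) : lbar (θQ p) = θQ p := by
  change (invert : Λ ≃ₐ[ℚ] Λ).toAlgHom.comp θQ p = θQ p
  congr 1
  refine Polynomial.algHom_ext ?_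
  simp [θQ, add_comm]

theorem lbar_involutive : Involutive lbar := involutive_invert

def redE (Δ : Λ) (n : ℕ) (hn : 1 ≤ n) : En Δ n →+* En Δ 1 :=
  Ideal.Quotient.factor (Ideal.span_singleton_le_span_singleton.mpr (pow_dvd_pow Δ hn))

section Reduction

variable {Δ : Λ} {Δs : Polynomial ℚ} (hθ : θQ Δs = Δ) (hsym : lbar Δ = Δ) {n : ℕ} (hn : 1 ≤ n)

theorem redE_ιDE (x : Dn Δs n) :
    redE Δ n hn (ιDE Δ Δs hθ n x) = ιDE Δ Δs hθ 1 (redD Δs n hn x) := by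
  obtain ⟨p, rfl⟩ := Ideal.Quotient.mk_surjective x
  rfl

theorem redE_barE (x : En Δ n) :
    redE Δ n hn (barE Δ hsym n x) = barE Δ hsym 1 (redE Δ n hn x) := by
  obtain ⟨P, rfl⟩ := Ideal.Quotient.mk_surjective x
  rfl

theorem barE_ιDE (x : Dn Δs n) : barE Δ hsym n (ιDE Δ Δs hθ n x) = ιDE Δ Δs hθ n x := by
  obtain ⟨p, rfl⟩ := Ideal.Quotient.mk_surjective x
  exact congrArg (Ideal.Quotient.mk _) (lbar_θQ p)

theorem barE_involutive : Involutive (barE Δ hsym n) := by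
  intro x
  obtain ⟨P, rfl⟩ := Ideal.Quotient.mk_surjective x
  exact congrArg (Ideal.Quotient.mk _) (lbar_involutive P)

theorem isNilpotent_of_redD_eq_zero {x : Dn Δs n} (hx : redD Δs n hn x = 0) : IsNilpotent x :=
  Ideal.Quotient.isNilpotent_of_factor_eq_zero (k := n)
    (by rw [pow_one, Ideal.span_singleton_pow]) _ hx

theorem isNilpotent_of_redE_eq_zero {x : En Δ n} (hx : redE Δ n hn x = 0) : IsNilpotent x :=
  Ideal.Quotient.isNilpotent_of_factor_eq_zero (k := n)
    (by rw [pow_one, Ideal.span_singleton_pow]) _ hx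

theorem units_map_redD_surjective : Surjective (Units.map (redD Δs n hn).toMonoidHom) :=
  IsLocalRing.surjective_units_map_of_local_ringHom _ (Ideal.Quotient.factor_surjective _)
    (isLocalHom_of_isNilpotent_ker _ (Ideal.Quotient.factor_surjective _)
      fun _ => isNilpotent_of_redD_eq_zero hn)

theorem normSub_le_comap_redD : normSub Δ Δs hθ hsym n ≤
    (normSub Δ Δs hθ hsym 1).comap (Units.map (redD Δs n hn).toMonoidHom) := by
  rintro d ⟨R, hR⟩
  refine ⟨Units.map (redE Δ n hn).toMonoidHom R, ?_⟩
  simp [← redE_ιDE, hR, redE_barE]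

theorem comap_redD_le_normSub :
    (normSub Δ Δs hθ hsym 1).comap (Units.map (redD Δs n hn).toMonoidHom) ≤
      normSub Δ Δs hθ hsym n := by
  rintro d ⟨R₁, hR₁⟩
  exact exists_eq_mul_conj_of_map_eq_mul_conj (barE Δ hsym n) (redE Δ n hn)
    (Ideal.Quotient.factor_surjective _) (fun _ => isNilpotent_of_redE_eq_zero hn)
    (barE Δ hsym 1) (barE_involutive hsym) (redE_barE hsym hn) (barE_ιDE hθ hsym _) R₁
    (by rw [redE_ιDE]; exact hR₁)

end Reduction

theorem stmt_3_general (Δ : Λ) (Δs : Polynomial ℚ)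
    (hsym : lbar Δ = Δ) (hθ : θQ Δs = Δ) (n : ℕ) (hn : 1 ≤ n) :
    ∃ e : ((Dn Δs n)ˣ ⧸ normSub Δ Δs hθ hsym n) ≃*
          ((Dn Δs 1)ˣ ⧸ normSub Δ Δs hθ hsym 1),
      ∀ d : (Dn Δs n)ˣ,
        e (QuotientGroup.mk d) =
          QuotientGroup.mk (Units.map (redD Δs n hn).toMonoidHom d) := by
  refine ⟨QuotientGroup.liftEquiv _
    (φ := (QuotientGroup.mk' _).comp (Units.map (redD Δs n hn).toMonoidHom))
    ((QuotientGroup.mk'_surjective _).comp (units_map_redD_surjective hn)) ?_, fun _ => rfl⟩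
  rw [← MonoidHom.comap_ker, QuotientGroup.ker_mk']
  exact le_antisymm (normSub_le_comap_redD hθ hsym hn) (comap_redD_le_normSub hθ hsym hn)

/-- the reduction `Dₙ → D₁` induces an isomorphism of cokernels. -/
theorem stmt_3 (Δ : Λ) (Δs : Polynomial ℚ)
    (hΔ : (Irreducible Δ ∧ SymmL Δ) ∨ Δ = tΛ + 2 + T (-1))
    (hsym : lbar Δ = Δ) (hθ : θQ Δs = Δ) (n : ℕ) (hn : 1 ≤ n) :
    ∃ e : ((Dn Δs n)ˣ ⧸ normSub Δ Δs hθ hsym n) ≃*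
          ((Dn Δs 1)ˣ ⧸ normSub Δ Δs hθ hsym 1),
      ∀ d : (Dn Δs n)ˣ,
        e (QuotientGroup.mk d) =
          QuotientGroup.mk (Units.map (redD Δs n hn).toMonoidHom d) :=
  stmt_3_general Δ Δs hsym hθ n hn
end
end

section
/- Let A be a finitely generated torsion Λ-module and φ a non-degenerate hermitian form on A. If γ ∈ A has order P (i.e. P generates the annihilator ideal of γ in Λ), then there exists η ∈ A such that φ(γ,η) = 1/P mod Λ. -/
open LaurentPolynomial

set_option maxHeartbeats 1000000
set_option synthInstance.maxHeartbeats 400000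

noncomputable section

/-
Since `P • γ = 0`, every value `φ(γ, η)` is killed by `P`, so it lies in the cyclic
module `(P⁻¹Λ)/Λ ≅ Λ/(P)`. As `η` varies these values form a submodule `M` (the form is semilinear
in `η` for a bijective involution), and by non-degeneracy `Q • M = 0` iff `Q • γ = 0` iff `P ∣ Q`.
A submodule of `Λ/(P)` with annihilator `(P)` is everything, because `Λ` is a principal ideal
domain; in particular `1/P ∈ M`.
-/

theorem IsLocalization.isPrincipalIdealRing {R S : Type*} [CommRing R] [CommRing S] [Algebra R S]
    (M : Submonoid R) [IsLocalization M S] [IsPrincipalIdealRing R] :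
    IsPrincipalIdealRing S where
  principal I := by
    obtain ⟨g, hg⟩ := IsPrincipalIdealRing.principal (I.under R)
    refine ⟨algebraMap R S g, ?_⟩
    rw [← IsLocalization.map_under M S I, hg, Ideal.submodule_span_eq, Ideal.map_span,
      Set.image_singleton, Ideal.submodule_span_eq]

instance : IsPrincipalIdealRing Λ :=
  IsLocalization.isPrincipalIdealRing (Submonoid.powers (Polynomial.X : Polynomial ℚ))

instance : RingHomSurjective lbar := ⟨involutive_invert.surjective⟩

lemma qbar_add (x y : QL) : qbar (x + y) = qbar x + qbar y := by
  obtain ⟨a, rfl⟩ := ΛinK.mkQ_surjective x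
  obtain ⟨b, rfl⟩ := ΛinK.mkQ_surjective y
  rw [← map_add, qbar_mk, qbar_mk, qbar_mk, map_add, map_add]

lemma qbar_smul (r : Λ) (x : QL) : qbar (r • x) = lbar r • qbar x := by
  obtain ⟨a, rfl⟩ := ΛinK.mkQ_surjective x
  rw [← map_smul, qbar_mk, qbar_mk, ← map_smul, Algebra.smul_def, Algebra.smul_def, map_mul,
    kbar_algebraMap]

lemma fracQ_eq_smul (r P : Λ) : fracQ r P = r • fracQ 1 P := by
  rw [fracQ, fracQ, ← map_smul, Algebra.smul_def, map_one, mul_one_div]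

lemma fracQ_zero_right (r : Λ) : fracQ r 0 = 0 := by
  simp [fracQ]

lemma fracQ_eq_zero_iff {r P : Λ} (hP : P ≠ 0) : fracQ r P = 0 ↔ P ∣ r := by
  have hPK : algebraMap Λ KΛ P ≠ 0 := (IsFractionRing.to_map_ne_zero_of_mem_nonZeroDivisors
    (mem_nonZeroDivisors_of_ne_zero hP))
  rw [fracQ, Submodule.mkQ_apply, Submodule.Quotient.mk_eq_zero, ΛinK, LinearMap.mem_range]
  simp only [Algebra.linearMap_apply, eq_div_iff hPK, ← map_mul,
    (IsFractionRing.injective Λ KΛ).eq_iff, dvd_iff_exists_eq_mul_left, eq_comm]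

lemma exists_eq_fracQ_of_smul_eq_zero {P : Λ} (hP : P ≠ 0) {x : QL} (hx : P • x = 0) :
    ∃ r, x = fracQ r P := by
  have hPK : algebraMap Λ KΛ P ≠ 0 := (IsFractionRing.to_map_ne_zero_of_mem_nonZeroDivisors
    (mem_nonZeroDivisors_of_ne_zero hP))
  obtain ⟨a, rfl⟩ := ΛinK.mkQ_surjective x
  obtain ⟨r, hr⟩ := (Submodule.Quotient.mk_eq_zero _).mp ((map_smul ΛinK.mkQ P a).trans hx)
  refine ⟨r, congrArg QLmk ?_⟩
  rw [eq_div_iff hPK, mul_comm, ← Algebra.smul_def]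
  exact hr.symm

open Submodule.IsPrincipal in
theorem fracQ_one_mem_of_annihilator {M : Submodule Λ QL} {P : Λ}
    (hM : ∀ Q : Λ, (∀ x ∈ M, Q • x = 0) ↔ P ∣ Q) : fracQ 1 P ∈ M := by
  rcases eq_or_ne P 0 with rfl | hP
  · rw [fracQ_zero_right]
    exact M.zero_mem
  -- Writing the numerator ideal `I` as `(d)` and `P = d * Q`, every `(d * s)/P = s/Q` is killed
  -- by `Q`, so `P ∣ Q` and `d` is a unit.
  let I : Ideal Λ := M.comap (LinearMap.toSpanSingleton Λ QL (fracQ 1 P))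
  have mem_I (r : Λ) : r ∈ I ↔ fracQ r P ∈ M := by
    rw [fracQ_eq_smul]
    rfl
  have hPI : P ∈ I := by
    rw [mem_I, (fracQ_eq_zero_iff hP).mpr dvd_rfl]
    exact M.zero_mem
  obtain ⟨Q, hQ⟩ := (mem_iff_generator_dvd I).mp hPI
  have hQM : ∀ x ∈ M, Q • x = 0 := by
    intro x hx
    obtain ⟨r, rfl⟩ := exists_eq_fracQ_of_smul_eq_zero hP ((hM P).mpr dvd_rfl x hx)
    obtain ⟨s, rfl⟩ := (mem_iff_generator_dvd I).mp ((mem_I r).mpr hx)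
    rw [fracQ_eq_smul, smul_smul, ← fracQ_eq_smul, fracQ_eq_zero_iff hP, hQ]
    exact ⟨s, by ring⟩
  have hQ0 : Q ≠ 0 := right_ne_zero_of_mul (hQ ▸ hP)
  have hd : IsUnit (generator I) := by
    have hdvd : generator I * Q ∣ 1 * Q := by simpa [← hQ] using (hM Q).mp hQM
    exact isUnit_of_dvd_one ((mul_dvd_mul_iff_right hQ0).mp hdvd)
  exact (mem_I 1).mp ((mem_iff_generator_dvd I).mpr hd.dvd)

namespace HermForm

variable {A : Type*} [AddCommGroup A] [Module Λ A] (φ : HermForm A)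

@[simps]
def rightSemilinear (x : A) : A →ₛₗ[lbar] QL where
  toFun := φ.bil x
  map_add' y z := by rw [φ.conj_symm, φ.add_left, qbar_add, ← φ.conj_symm, ← φ.conj_symm]
  map_smul' r y := by rw [φ.conj_symm, φ.smul_left, qbar_smul, ← φ.conj_symm]

lemma bil_zero_left (y : A) : φ.bil 0 y = 0 := by
  simpa using φ.smul_left 0 0 y

lemma Nondeg.eq_zero_iff {φ : HermForm A} (hφ : φ.Nondeg) {x : A} :
    x = 0 ↔ ∀ y, φ.bil x y = 0 :=
  ⟨fun hx y => hx ▸ φ.bil_zero_left y, hφ x⟩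

end HermForm

theorem stmt_5_general (A : Type) [AddCommGroup A] [Module Λ A]
    (φ : HermForm A) (hnd : φ.Nondeg)
    (γ : A) (P : Λ) (hP : ∀ r : Λ, r • γ = 0 ↔ P ∣ r) :
    ∃ η : A, φ.bil γ η = fracQ 1 P := by
  have hann (Q : Λ) : (∀ x ∈ LinearMap.range (φ.rightSemilinear γ), Q • x = 0) ↔ P ∣ Q := by
    simp only [LinearMap.mem_range, forall_exists_index, forall_apply_eq_imp_iff,
      HermForm.rightSemilinear_apply, ← hP Q, hnd.eq_zero_iff, φ.smul_left]
  exact fracQ_one_mem_of_annihilator hann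

theorem stmt_5 (A : Type) [AddCommGroup A] [Module Λ A] [Module.Finite Λ A]
    (htors : Module.IsTorsion Λ A)
    (φ : HermForm A) (hnd : φ.Nondeg)
    (γ : A) (P : Λ) (hP : ∀ r : Λ, r • γ = 0 ↔ P ∣ r) :
    ∃ η : A, φ.bil γ η = fracQ 1 P :=
  stmt_5_general A φ hnd γ P hP
end
end

section
/- Let δ ∈ Λ be nonzero with δ(t⁻¹) ≐ δ(t) and δ(1) ≠ 0. Then for every nonzero complex number α, the multiplicities of α and of α⁻¹ as roots of δ are equal; 1 is not a root of δ; and δ has odd degree if and only if −1 is a root of δ of odd multiplicity (equivalently, the largest k with (1+t)^k dividing δ in Λ is odd). -/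
/-!
Write `δ = t^k f` with `f ∈ ℚ[t]`, `f(0) ≠ 0`. The units of `Λ` are the monomials `c tⁿ`,
so `δ(t⁻¹) ≐ δ(t)` makes the reciprocal polynomial of `f` equal to `c f`, and evaluating at
`1` (where `f(1) = δ(1) ≠ 0`) gives `c = 1`: `f` is palindromic. Reversal turns
`(X - α)^m ∣ f` into `(1 - αX)^m ∣ f`, whence the symmetry of multiplicities. Writing
`f = (X + 1)^m h` with `h(-1) ≠ 0`, the cofactor `h` is again palindromic, and
`h(-1) = (-1)^(deg h) h(-1)` forces `deg h` to be even; hence `deg f ≡ m (mod 2)`.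
-/

open LaurentPolynomial

set_option maxHeartbeats 1000000
set_option synthInstance.maxHeartbeats 400000

noncomputable section

namespace Polynomial

variable {R : Type*}

section Semiring

variable [Semiring R]

theorem reverse_pow [NoZeroDivisors R] (p : R[X]) (n : ℕ) : (p ^ n).reverse = p.reverse ^ n := by
  induction n with
  | zero => simpa using reverse_C (1 : R)
  | succ n ih => rw [pow_succ, pow_succ, reverse_mul_of_domain, ih]

theorem reverse_dvd_reverse [NoZeroDivisors R] {p q : R[X]} (h : p ∣ q) :
    p.reverse ∣ q.reverse := by
  obtain ⟨r, rfl⟩ := h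
  exact ⟨r.reverse, reverse_mul_of_domain p r⟩

theorem reverse_map_of_injective {S : Type*} [Semiring S] {f : R →+* S}
    (hf : Function.Injective f) (p : R[X]) : (p.map f).reverse = p.reverse.map f := by
  rw [reverse, reverse, natDegree_map_eq_of_injective hf, reflect_map]

end Semiring

theorem eval_one_reverse [CommSemiring R] (p : R[X]) : p.reverse.eval 1 = p.eval 1 := by
  let _ : Invertible (1 : R) := invertibleOne
  simpa using eval₂_reverse_mul_pow (RingHom.id R) 1 p

section CommRing

variable [CommRing R]

theorem eval_neg_one_reverse_mul_pow (p : R[X]) :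
    p.reverse.eval (-1) * (-1) ^ p.natDegree = p.eval (-1) := by
  let _ : Invertible (1 : R) := invertibleOne
  let _ : Invertible (-1 : R) := invertibleNeg 1
  simpa [invOf_neg] using eval₂_reverse_mul_pow (RingHom.id R) (-1) p

theorem reverse_X_sub_C (a : R) : (X - C a).reverse = 1 - C a * X := by
  nontriviality R
  rw [reverse, natDegree_X_sub_C, reflect_sub, reflect_one_X, reflect_C, pow_one]

theorem even_natDegree_of_reverse_eq [IsDomain R] (hR : (-1 : R) ≠ 1) {p : R[X]}
    (hrev : p.reverse = p) (hp : p.eval (-1) ≠ 0) : Even p.natDegree := by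
  have h := eval_neg_one_reverse_mul_pow p
  rw [hrev, mul_eq_left₀ hp] at h
  exact (neg_one_pow_eq_one_iff_even hR).mp h

theorem odd_natDegree_iff_odd_rootMultiplicity_neg_one [IsDomain R] (hR : (-1 : R) ≠ 1)
    {p : R[X]} (hp : p ≠ 0) (hrev : p.reverse = p) :
    Odd p.natDegree ↔ Odd (p.rootMultiplicity (-1)) := by
  set m := p.rootMultiplicity (-1)
  set h := p /ₘ (X - C (-1)) ^ m
  have hdecomp : (X - C (-1)) ^ m * h = p := pow_mul_divByMonic_rootMultiplicity_eq p (-1)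
  have hh : h.eval (-1) ≠ 0 := eval_divByMonic_pow_rootMultiplicity_ne_zero (-1) hp
  have hfactor_rev : (X - C (-1) : R[X]).reverse = X - C (-1) := by
    rw [reverse_X_sub_C]
    simp only [map_neg, map_one]
    ring
  have hpow_ne : (X - C (-1) : R[X]) ^ m ≠ 0 := pow_ne_zero _ (X_sub_C_ne_zero _)
  have hrev_h : h.reverse = h := by
    apply mul_left_cancel₀ hpow_ne
    calc (X - C (-1)) ^ m * h.reverse = ((X - C (-1)) ^ m * h).reverse := by
          rw [reverse_mul_of_domain, reverse_pow, hfactor_rev]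
      _ = (X - C (-1)) ^ m * h := by rw [hdecomp, hrev]
  have hdeg : p.natDegree = m + h.natDegree := by
    rw [← hdecomp, natDegree_mul hpow_ne (fun h0 => hh (by simp [h0])), natDegree_pow,
      natDegree_X_sub_C, mul_one]
  simp [hdeg, Nat.odd_add, even_natDegree_of_reverse_eq hR hrev_h hh]

end CommRing

section Field

variable {K : Type*} [Field K]

theorem rootMultiplicity_le_rootMultiplicity_inv {p : K[X]} (hp : p ≠ 0)
    (hrev : p.reverse = p) {a : K} (ha : a ≠ 0) :
    p.rootMultiplicity a ≤ p.rootMultiplicity a⁻¹ := by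
  rw [le_rootMultiplicity_iff hp]
  have hCC : C a * C a⁻¹ = 1 := by rw [← C_mul, mul_inv_cancel₀ ha, C_1]
  have hfactor : X - C a⁻¹ ∣ (X - C a).reverse :=
    ⟨-C a, by rw [reverse_X_sub_C]; linear_combination -hCC⟩
  calc (X - C a⁻¹) ^ p.rootMultiplicity a ∣ ((X - C a) ^ p.rootMultiplicity a).reverse := by
        rw [reverse_pow]; exact pow_dvd_pow_of_dvd hfactor _
    _ ∣ p := by simpa only [hrev] using reverse_dvd_reverse (pow_rootMultiplicity_dvd p a)

theorem rootMultiplicity_eq_rootMultiplicity_inv_of_reverse_eq {p : K[X]} (hp : p ≠ 0)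
    (hrev : p.reverse = p) {a : K} (ha : a ≠ 0) :
    p.rootMultiplicity a = p.rootMultiplicity a⁻¹ := by
  refine le_antisymm (rootMultiplicity_le_rootMultiplicity_inv hp hrev ha) ?_
  simpa using rootMultiplicity_le_rootMultiplicity_inv hp hrev (inv_ne_zero ha)

end Field

end Polynomial

namespace LaurentPolynomial

open Polynomial

variable {R : Type*}

theorem exists_C_mul_T_of_isUnit [CommRing R] [IsDomain R] {u : R[T;T⁻¹]} (hu : IsUnit u) :
    ∃ (a : R) (n : ℤ), IsUnit a ∧ u = C a * T n := by
  obtain ⟨v, huv⟩ := hu.exists_right_inv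
  obtain ⟨n, u', hu'⟩ := exists_T_pow u
  obtain ⟨m, v', hv'⟩ := exists_T_pow v
  have hprod : u' * v' = X ^ (n + m) := by
    apply toLaurent_injective
    rw [map_mul, hu', hv', toLaurent_X_pow, Nat.cast_add, T_add,
      mul_mul_mul_comm, huv, one_mul]
  obtain ⟨i, -, w, hw⟩ := (dvd_prime_pow prime_X _).mp (Dvd.intro _ hprod)
  obtain ⟨c, hc, hcw⟩ := Polynomial.isUnit_iff.mp w.isUnit
  obtain ⟨c', hcc'⟩ := hc.exists_right_inv
  refine ⟨c', i - n, .of_mul_eq_one_right c hcc', ?_⟩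
  have hmono : u * T n * C c = T i := by
    rw [← hu', ← toLaurent_C, ← map_mul, hcw, hw, toLaurent_X_pow]
  have hT : T n * T (-n) = (1 : R[T;T⁻¹]) := by rw [← T_add, add_neg_cancel, T_zero]
  have hC : C c * C c' = (1 : R[T;T⁻¹]) := by rw [← map_mul, hcc', map_one]
  calc u = u * (T n * T (-n)) * (C c * C c') := by rw [hT, hC, mul_one, mul_one]
    _ = u * T n * C c * (C c' * T (-n)) := by ring
    _ = C c' * T (i - n) := by rw [hmono, sub_eq_add_neg, T_add]; ring

theorem eq_of_toLaurent_mul_T_eq [Semiring R] {p q : R[X]} (hp : p.coeff 0 ≠ 0)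
    (hq : q.coeff 0 ≠ 0) {m : ℤ} (h : toLaurent p * T m = toLaurent q) : p = q := by
  wlog hm : 0 ≤ m generalizing p q m
  · refine (this hq hp (m := -m) ?_ (by omega)).symm
    rw [← h, mul_T_assoc, add_neg_cancel, T_zero, mul_one]
  lift m to ℕ using hm
  rw [← toLaurent_X_pow, ← map_mul, toLaurent_inj] at h
  obtain rfl | hm := eq_or_ne m 0
  · simpa using h
  · exact absurd (by simp [← h, hm.symm]) hq

theorem toLaurent_dvd_toLaurent_iff [CommRing R] {p f : R[X]} (hp : IsCoprime p X) :
    toLaurent p ∣ toLaurent f ↔ p ∣ f := by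
  refine ⟨fun ⟨Q, hQ⟩ => ?_, map_dvd toLaurent⟩
  obtain ⟨n, Q', hQ'⟩ := exists_T_pow Q
  have hmul : f * X ^ n = p * Q' := by
    apply toLaurent_injective
    rw [map_mul, map_mul, toLaurent_X_pow, hQ', hQ, mul_assoc]
  exact (hp.pow_right (n := n)).dvd_of_dvd_mul_right ⟨Q', hmul⟩

theorem reverse_eq_of_associated_invert [CommRing R] [IsDomain R] {f : R[X]}
    (h0 : f.coeff 0 ≠ 0) (h1 : f.eval 1 ≠ 0)
    (h : Associated (invert (toLaurent f)) (toLaurent f)) : f.reverse = f := by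
  obtain ⟨u, hu⟩ := h
  obtain ⟨a, n, ha, hua⟩ := exists_C_mul_T_of_isUnit u.isUnit
  have hf : f ≠ 0 := fun hf => h0 (by simp [hf])
  have hinv : invert (toLaurent f) = toLaurent f.reverse * T (-f.natDegree) := by
    rw [toLaurent_reverse, mul_T_assoc, add_neg_cancel, T_zero, mul_one]
  have hshift : toLaurent (Polynomial.C a * f.reverse) * T (n - f.natDegree) = toLaurent f := by
    rw [← hu, hua, hinv, map_mul, toLaurent_C, sub_eq_add_neg, T_add]
    ring
  have hCa : Polynomial.C a * f.reverse = f := eq_of_toLaurent_mul_T_eq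
    (by simpa [coeff_zero_reverse] using ⟨ha.ne_zero, hf⟩) h0 hshift
  have ha1 : a = 1 := by
    have := congrArg (eval 1) hCa
    rwa [eval_mul, eval_C, eval_one_reverse, mul_eq_right₀ h1] at this
  simpa [ha1] using hCa

end LaurentPolynomial

open Polynomial

theorem evalL_T (q : ℚˣ) (n : ℤ) : evalL q (T n) = (q : ℚ) ^ n := by
  rw [evalL, show (T n : Λ) = AddMonoidAlgebra.single n 1 from rfl, AddMonoidAlgebra.lift_single]
  simp

theorem evalL_toLaurent (q : ℚˣ) (f : ℚ[X]) : evalL q (toLaurent f) = f.eval (q : ℚ) := by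
  have h : (evalL q).comp toLaurentAlg = aeval (q : ℚ) :=
    algHom_ext (by simpa using evalL_T q 1)
  simpa using DFunLike.congr_fun h f

theorem associated_invert_of_associated_lbar {f : ℚ[X]} {k : ℤ}
    (h : Associated (lbar (T k * toLaurent f)) (T k * toLaurent f)) :
    Associated (invert (toLaurent f)) (toLaurent f) := by
  have hlbar : Associated (lbar (T k * toLaurent f)) (invert (toLaurent f)) := by
    change Associated (invert (T k * toLaurent f)) _
    rw [map_mul, invert_T]
    exact associated_unit_mul_left _ _ (isUnit_T _)
  exact hlbar.symm.trans (h.trans (associated_unit_mul_left _ _ (isUnit_T k)))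

theorem one_add_tΛ_pow_dvd_iff (f : ℚ[X]) (k : ℤ) (j : ℕ) :
    (1 + tΛ) ^ j ∣ T k * toLaurent f ↔ (X - Polynomial.C (-1)) ^ j ∣ f := by
  have hpow : (1 + tΛ) ^ j = toLaurent ((X - Polynomial.C (-1)) ^ j) := by
    simp [tΛ, add_comm]
  rw [hpow, (isUnit_T k).dvd_mul_left]
  exact toLaurent_dvd_toLaurent_iff (IsCoprime.pow_left ⟨1, -1, by simp⟩)

theorem rootMultiplicity_neg_one_eq_of_dvd {f : ℚ[X]} (hf : f ≠ 0) {k : ℤ} {j : ℕ}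
    (hdvd : (1 + tΛ) ^ j ∣ T k * toLaurent f)
    (hndvd : ¬ (1 + tΛ) ^ (j + 1) ∣ T k * toLaurent f) :
    f.rootMultiplicity (-1) = j :=
  le_antisymm ((rootMultiplicity_le_iff hf _ _).mpr (mt (one_add_tΛ_pow_dvd_iff f k _).mpr hndvd))
    ((le_rootMultiplicity_iff hf).mpr ((one_add_tΛ_pow_dvd_iff f k j).mp hdvd))

theorem stmt_9_general (δ : Λ)
    (hsa : Associated (lbar δ) δ) (h1 : evalL 1 δ ≠ 0) :
    ∀ (f : Polynomial ℚ) (k : ℤ),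
      δ = T k * Polynomial.toLaurent f → f.coeff 0 ≠ 0 →
      ((∀ α : ℂ, α ≠ 0 →
          (f.map (algebraMap ℚ ℂ)).rootMultiplicity α =
            (f.map (algebraMap ℚ ℂ)).rootMultiplicity α⁻¹) ∧
        f.eval 1 ≠ 0 ∧
        (Odd f.natDegree ↔ Odd ((f.map (algebraMap ℚ ℂ)).rootMultiplicity (-1))) ∧
        (∀ kk : ℕ, (1 + tΛ) ^ kk ∣ δ → ¬ (1 + tΛ) ^ (kk + 1) ∣ δ →
          (Odd f.natDegree ↔ Odd kk))) := by
  rintro f k rfl hf0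
  have hf : f ≠ 0 := fun hf => hf0 (by simp [hf])
  have hf1 : f.eval 1 ≠ 0 := by simpa [evalL_T, evalL_toLaurent] using h1
  have hrev : f.reverse = f :=
    reverse_eq_of_associated_invert hf0 hf1 (associated_invert_of_associated_lbar hsa)
  have hparity : Odd f.natDegree ↔ Odd (f.rootMultiplicity (-1)) :=
    odd_natDegree_iff_odd_rootMultiplicity_neg_one (by norm_num) hf hrev
  have hinj : Function.Injective (algebraMap ℚ ℂ) := (algebraMap ℚ ℂ).injective
  refine ⟨fun α hα => ?_, hf1, ?_, fun kk hdvd hndvd => ?_⟩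
  · refine rootMultiplicity_eq_rootMultiplicity_inv_of_reverse_eq
      ((Polynomial.map_ne_zero_iff hinj).mpr hf) ?_ hα
    rw [reverse_map_of_injective hinj, hrev]
  · rw [hparity, eq_rootMultiplicity_map hinj (-1), map_neg, map_one]
  · rwa [← rootMultiplicity_neg_one_eq_of_dvd hf hdvd hndvd]

/-- roots of symmetric annihilators come in pairs `(α, α⁻¹)`;
`1` is not a root; odd degree corresponds to odd multiplicity of the root `-1`. -/
theorem stmt_9 (δ : Λ) (hδ : δ ≠ 0)
    (hsa : Associated (lbar δ) δ) (h1 : evalL 1 δ ≠ 0) :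
    ∀ (f : Polynomial ℚ) (k : ℤ),
      δ = T k * Polynomial.toLaurent f → f.coeff 0 ≠ 0 →
      ((∀ α : ℂ, α ≠ 0 →
          (f.map (algebraMap ℚ ℂ)).rootMultiplicity α =
            (f.map (algebraMap ℚ ℂ)).rootMultiplicity α⁻¹) ∧
        f.eval 1 ≠ 0 ∧
        (Odd f.natDegree ↔ Odd ((f.map (algebraMap ℚ ℂ)).rootMultiplicity (-1))) ∧
        (∀ kk : ℕ, (1 + tΛ) ^ kk ∣ δ → ¬ (1 + tΛ) ^ (kk + 1) ∣ δ →
          (Odd f.natDegree ↔ Odd kk))) :=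
  stmt_9_general δ hsa h1
end
end
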